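/- For arbitrary n×n matrices C_1,…,C_n over A, ⟨⟨C_1,…,C_n⟩⟩ = ∑_{κ∈I_n} α(κ)·C_1^(1)·P_{1,κ(1)}·C_2^(2)·P_{2,κ(2)}⋯C_n^(n)·P_{n,κ(n)}, where P_{ii} := Id (in particular the last factor P_{n,κ(n)} = P_{nn} is the identity). -/
import Mathlib


/-!
STATEMENT 8: ⟨⟨C_1,…,C_n⟩⟩ = ∑_{κ∈I_n} α(κ)·C_1^(1)·P_{1,κ(1)}·C_2^(2)·P_{2,κ(2)}⋯C_n^(n)·P_{n,κ(n)},
with P_{ii} = Id. The point `i : Fin n` carries the label `i+1 ∈ {1,…,n}`.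
-/

noncomputable section

abbrev K : Type := RatFunc ℚ

def u : K := RatFunc.X

/-- Operators on the n-fold tensor power of K^n with coefficients in A. -/
abbrev Op (A : Type*) (n : ℕ) := Matrix (Fin n → Fin n) (Fin n → Fin n) A

variable {A : Type*} [Ring A] [Algebra K A] {n : ℕ}

/-- `act C s` = C^(s): the matrix C acting on the s-th tensor factor. -/
def act (C : Matrix (Fin n) (Fin n) A) (s : Fin n) : Op A n :=
  fun f g => if ∀ t, t ≠ s → f t = g t then C (f s) (g s) else 0

/-- `Pop σ` = P_σ: permutation of the tensor factors according to σ. -/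
def Pop (σ : Equiv.Perm (Fin n)) : Op A n :=
  fun f g => if f = g ∘ ⇑σ⁻¹ then (1 : A) else 0

/-- P_{ij} (with P_{ii} = Id). -/
def Pij (i j : Fin n) : Op A n := Pop (Equiv.swap i j)

/-- Π_k = 1 − (2u−k−n+2)⁻¹ ∑_{i=k+1}^n P_{ki}, with label k+1. -/
def Piop (k : Fin n) : Op A n :=
  (1 : Op A n) -
    ((2 * u - ((k : ℕ) + 1 : K) - (n : K) + 2)⁻¹ : K) •
      ∑ i ∈ Finset.univ.filter (fun i => k < i), Pij k i

/-- ⟨⟨C_1,…,C_n⟩⟩ = C_1^(1)·Π_1·C_2^(2)·Π_2⋯Π_{n−1}·C_n^(n). -/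
def braket (C : Fin n → Matrix (Fin n) (Fin n) A) : Op A n :=
  ((List.finRange n).map (fun s => act (C s) s * Piop s)).prod

/-- I_n: the tuples κ with i ≤ κ(i) for all i. -/
def In (n : ℕ) : Finset (Fin n → Fin n) :=
  Finset.univ.filter (fun κ => ∀ i, i ≤ κ i)

/-- α(κ) = ∏_{i : i < κ(i)} (n−2u−2+i)⁻¹, with label i+1. -/
def alphaK (κ : Fin n → Fin n) : K :=
  ∏ i ∈ Finset.univ.filter (fun i => i < κ i), ((n : K) - 2 * u - 2 + ((i : ℕ) + 1 : K))⁻¹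


theorem prod_sum_noncomm {M ι : Type*} [Semiring M] :
    ∀ (n : ℕ) (S : Fin n → Finset ι) (f : Fin n → ι → M),
    ((List.finRange n).map (fun s => ∑ j ∈ S s, f s j)).prod
      = ∑ κ ∈ Fintype.piFinset S, ((List.finRange n).map (fun s => f s (κ s))).prod := by
  intro n
  induction n with
  | zero => intro S f; simp
  | succ n ih =>
      intro S f
      rw [List.finRange_succ]
      have hpi : Fintype.piFinset S =
          (S 0 ×ˢ Fintype.piFinset (Fin.tail S)).map (Fin.consEquiv _).toEmbedding := by
        have := Finset.filter_piFinset_eq_map_consEquiv S (fun _ => True)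
        simpa using this
      rw [hpi, Finset.sum_map, Finset.sum_product]
      simp only [List.map_cons, List.map_map, List.prod_cons, Function.comp_def]
      rw [ih (fun s => S s.succ) (fun s j => f s.succ j), Finset.sum_mul_sum]
      refine Finset.sum_congr rfl fun j _ => Finset.sum_congr rfl fun κ _ => ?_
      simp [Fin.consEquiv, Fin.cons_zero, Fin.cons_succ, Fin.tail]

theorem list_smul_prod {R M : Type*} [CommSemiring R] [Semiring M] [Algebra R M]
    {ι : Type*} (l : List ι) (c : ι → R) (g : ι → M) :
    (l.map (fun s => c s • g s)).prod = (l.map c).prod • (l.map g).prod := by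
  induction l with
  | nil => simp
  | cons a l ih =>
      simp only [List.map_cons, List.prod_cons, ih, smul_mul_assoc, Algebra.mul_smul_comm,
        smul_smul, mul_comm]

/-- coefficient β(s,j) -/
def betaK (n : ℕ) (s j : Fin n) : K :=
  if s < j then -((2 * u - ((s : ℕ) + 1 : K) - (n : K) + 2)⁻¹) else 1

lemma Pij_self (s : Fin n) : (Pij s s : Op A n) = 1 := by
  ext f g
  simp only [Pij, Pop, Equiv.swap_self, Matrix.one_apply]
  have : (Equiv.refl (Fin n))⁻¹ = Equiv.refl (Fin n) := rfl
  simp [this, eq_comm, funext_iff, Function.comp]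

lemma Piop_eq_sum (s : Fin n) :
    (Piop s : Op A n) = ∑ j ∈ Finset.Ici s, betaK n s j • Pij s j := by
  have h : Finset.Ici s = insert s (Finset.Ioi s) := by
    ext x; simp [Finset.mem_Ici, Finset.mem_Ioi, le_iff_lt_or_eq, or_comm, eq_comm]
  rw [h, Finset.sum_insert (by simp)]
  have h2 : Finset.univ.filter (fun i => s < i) = Finset.Ioi s := by
    ext x; simp
  rw [Piop, h2]
  rw [show (betaK n s s • Pij s s : Op A n) = 1 by
    simp [betaK, Pij_self]]
  rw [sub_eq_add_neg, Finset.smul_sum, ← Finset.sum_neg_distrib]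
  congr 1
  refine Finset.sum_congr rfl fun j hj => ?_
  simp only [Finset.mem_Ioi] at hj
  simp [betaK, hj, neg_smul]

theorem braket_eq_sum_In (hn : 1 ≤ n) (C : Fin n → Matrix (Fin n) (Fin n) A) :
    braket C =
      ∑ κ ∈ In n, alphaK κ •
        ((List.finRange n).map (fun s => act (C s) s * Pij s (κ s))).prod := by
  classical
  have hIn : In n = Fintype.piFinset (fun s => Finset.Ici s) := by
    ext κ; simp [In, Fintype.mem_piFinset]
  unfold braket
  have hstep : (fun s => act (C s) s * Piop s) =
      fun s => ∑ j ∈ Finset.Ici s, betaK n s j • (act (C s) s * Pij s j) := by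
    funext s
    rw [Piop_eq_sum, Finset.mul_sum]
    exact Finset.sum_congr rfl fun j _ => (Algebra.mul_smul_comm _ _ _)
  rw [hstep, prod_sum_noncomm n (fun s => Finset.Ici s)
    (fun s j => betaK n s j • (act (C s) s * Pij s j)), ← hIn]
  refine Finset.sum_congr rfl fun κ hκ => ?_
  rw [list_smul_prod]
  congr 1
  have hκ' : ∀ i, i ≤ κ i := by
    simp only [In, Finset.mem_filter] at hκ; exact hκ.2
  rw [← Fin.prod_univ_def]
  rw [← Finset.prod_filter_mul_prod_filter_not Finset.univ (fun s => s < κ s)]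
  have h1 : ∏ s ∈ Finset.univ.filter (fun s => ¬ s < κ s), betaK n s (κ s) = 1 := by
    refine Finset.prod_eq_one fun s hs => ?_
    simp only [Finset.mem_filter] at hs
    simp [betaK, hs.2]
  rw [h1, mul_one, alphaK]
  refine Finset.prod_congr rfl fun s hs => ?_
  simp only [Finset.mem_filter] at hs
  rw [betaK, if_pos hs.2, ← inv_neg]
  congr 1
  ring


end
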